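/- arXiv:0707.1084 — 4 statements merged into one kernel-verified Lean document; each statement's English description precedes it below -/
import Mathlib

section
/- Let X : ℝ → ℝ be continuously differentiable with X(x) > 0 for all x, and let σ be a one-parameter group of diffeomorphisms generated by X (so σ(0,x) = x, σ(s,σ(t,x)) = σ(s+t,x), and ∂σ/∂t(t,x) = X(σ(t,x))). Fix h ∈ ℝ and let f : ℝ → ℝ be measurable such that x ↦ f(x)/X(x) is integrable on ℝ. Then x ↦ f(σ(h,x))/X(x) is integrable and ∫_ℝ f(σ(h,x))/X(x) dx = ∫_ℝ f(x)/X(x) dx. -/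
/-!
The time coordinate `τ(x) = ∫₀ˣ dt / X(t)` rectifies the flow: `τ(σ_t x) = τ(x) + t`. Hence `σ_h`
is conjugate under `τ` to a translation, and differentiating `τ ∘ σ_h = τ + h` gives
`σ_h'(x) = X(σ_h x) / X(x)`. The change of variables `y = σ_h x` then turns `∫ f(y)/X(y) dy`
into `∫ f(σ_h x)/X(x) dx`.
-/

open MeasureTheory

noncomputable def flowTime (X : ℝ → ℝ) (x : ℝ) : ℝ := ∫ t in (0 : ℝ)..x, (X t)⁻¹

section FlowTime

variable {X : ℝ → ℝ}

theorem hasDerivAt_flowTime (hX : Continuous X) (hXne : ∀ x, X x ≠ 0) (x : ℝ) :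
    HasDerivAt (flowTime X) (X x)⁻¹ x :=
  have hXinv : Continuous fun x => (X x)⁻¹ := hX.inv₀ hXne
  intervalIntegral.integral_hasDerivAt_right (hXinv.intervalIntegrable 0 x)
    (hXinv.stronglyMeasurableAtFilter _ _) hXinv.continuousAt

theorem strictMono_flowTime (hX : Continuous X) (hXpos : ∀ x, 0 < X x) :
    StrictMono (flowTime X) :=
  strictMono_of_deriv_pos fun x => by
    rw [(hasDerivAt_flowTime hX (fun y => (hXpos y).ne') x).deriv]
    exact inv_pos.2 (hXpos x)

theorem flowTime_flow {σ : ℝ → ℝ → ℝ} (hX : Continuous X) (hXne : ∀ x, X x ≠ 0)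
    (hσ0 : ∀ x, σ 0 x = x) (hflow : ∀ t x, HasDerivAt (fun s => σ s x) (X (σ t x)) t)
    (t x : ℝ) : flowTime X (σ t x) = flowTime X x + t := by
  have hderiv : ∀ s, HasDerivAt (fun u => flowTime X (σ u x) - u) 0 s := fun s => by
    have := ((hasDerivAt_flowTime hX hXne (σ s x)).comp s (hflow s x)).sub (hasDerivAt_id s)
    rwa [inv_mul_cancel₀ (hXne _), sub_self] at this
  have hconst := is_const_of_deriv_eq_zero (fun s => (hderiv s).differentiableAt)
    (fun s => (hderiv s).deriv) t 0
  simp only [hσ0, sub_zero] at hconst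
  linarith

end FlowTime

theorem hasDerivAt_of_conj_add_const (e : ℝ ≃o ℝ) {e' : ℝ → ℝ}
    (he : ∀ x, HasDerivAt e (e' x) x) (he' : ∀ x, e' x ≠ 0) {g : ℝ → ℝ} {c : ℝ}
    (hg : ∀ x, e (g x) = e x + c) (x : ℝ) : HasDerivAt g (e' x / e' (g x)) x := by
  have hg_eq : g = fun x => e.symm (e x + c) := funext fun x => by rw [← hg, e.symm_apply_apply]
  have hsymm : ∀ y, HasDerivAt e.symm (e' (e.symm y))⁻¹ y := fun y =>
    (he _).of_local_left_inverse e.symm.continuous.continuousAt (he' _)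
      (Filter.Eventually.of_forall e.apply_symm_apply)
  subst hg_eq
  rw [div_eq_inv_mul]
  exact (hsymm (e x + c)).comp x ((he x).add_const c)

section ChangeOfVariables

variable {X g : ℝ → ℝ}

theorem abs_div_smul_div_eq_div (hXpos : ∀ x, 0 < X x) (f : ℝ → ℝ) (x : ℝ) :
    |X (g x) / X x| • (f (g x) / X (g x)) = f (g x) / X x := by
  have := (hXpos (g x)).ne'
  rw [abs_of_pos (div_pos (hXpos _) (hXpos _)), smul_eq_mul]
  field_simp

theorem integrable_comp_div_iff (hXpos : ∀ x, 0 < X x) (hg : Function.Bijective g)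
    (hderiv : ∀ x, HasDerivAt g (X (g x) / X x) x) (f : ℝ → ℝ) :
    Integrable (fun x => f (g x) / X x) ↔ Integrable (fun x => f x / X x) := by
  have := integrableOn_image_iff_integrableOn_abs_deriv_smul MeasurableSet.univ
    (fun x _ => (hderiv x).hasDerivWithinAt) hg.injective.injOn fun y => f y / X y
  simpa only [Set.image_univ, hg.surjective.range_eq, integrableOn_univ,
    abs_div_smul_div_eq_div hXpos] using this.symm

theorem integral_comp_div (hXpos : ∀ x, 0 < X x) (hg : Function.Bijective g)
    (hderiv : ∀ x, HasDerivAt g (X (g x) / X x) x) (f : ℝ → ℝ) :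
    ∫ x, f (g x) / X x = ∫ x, f x / X x := by
  have := integral_image_eq_integral_abs_deriv_smul MeasurableSet.univ
    (fun x _ => (hderiv x).hasDerivWithinAt) hg.injective.injOn fun y => f y / X y
  simpa only [Set.image_univ, hg.surjective.range_eq, Measure.restrict_univ,
    abs_div_smul_div_eq_div hXpos] using this.symm

end ChangeOfVariables

theorem statement1_general (X : ℝ → ℝ) (σ : ℝ → ℝ → ℝ) (h : ℝ) (f : ℝ → ℝ)
    (hX : ContDiff ℝ 1 X) (hXpos : ∀ x : ℝ, 0 < X x)
    (hσ0 : ∀ x : ℝ, σ 0 x = x)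
    (hgrp : ∀ s t x : ℝ, σ s (σ t x) = σ (s + t) x)
    (hflow : ∀ t x : ℝ, HasDerivAt (fun s => σ s x) (X (σ t x)) t)
    (hint : Integrable (fun x => f x / X x)) :
    Integrable (fun x => f (σ h x) / X x) ∧
      (∫ x : ℝ, f (σ h x) / X x) = ∫ x : ℝ, f x / X x := by
  have hXne : ∀ x, X x ≠ 0 := fun x => (hXpos x).ne'
  have hτ := flowTime_flow hX.continuous hXne hσ0 hflow
  have hτsurj : Function.Surjective (flowTime X) := fun y =>
    ⟨σ (y - flowTime X 0) 0, by rw [hτ]; ring⟩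
  let e : ℝ ≃o ℝ :=
    (strictMono_flowTime hX.continuous hXpos).orderIsoOfSurjective _ hτsurj
  have hσ_inv : ∀ s x, σ (-s) (σ s x) = x := fun s x => by rw [hgrp, neg_add_cancel, hσ0]
  have hbij : Function.Bijective (σ h) :=
    ⟨Function.LeftInverse.injective (hσ_inv h),
      fun y => ⟨σ (-h) y, by simpa only [neg_neg] using hσ_inv (-h) y⟩⟩
  have hderiv : ∀ x, HasDerivAt (σ h) (X (σ h x) / X x) x := fun x => by
    simpa only [inv_div_inv] using hasDerivAt_of_conj_add_const e
      (hasDerivAt_flowTime hX.continuous hXne) (fun x => inv_ne_zero (hXne x))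
      (fun x => hτ h x) x
  exact ⟨(integrable_comp_div_iff hXpos hbij hderiv f).2 hint,
    integral_comp_div hXpos hbij hderiv f⟩

/-- Shift invariance of the continuous functional
`F(u) = ∫ f(x)/X(x) dx` under the shift generated by the flow of `X`. -/
theorem statement1 (X : ℝ → ℝ) (σ : ℝ → ℝ → ℝ) (h : ℝ) (f : ℝ → ℝ)
    (hX : ContDiff ℝ 1 X) (hXpos : ∀ x : ℝ, 0 < X x)
    (hσ0 : ∀ x : ℝ, σ 0 x = x)
    (hgrp : ∀ s t x : ℝ, σ s (σ t x) = σ (s + t) x)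
    (hflow : ∀ t x : ℝ, HasDerivAt (fun s => σ s x) (X (σ t x)) t)
    (hf : Measurable f)
    (hint : Integrable (fun x => f x / X x)) :
    Integrable (fun x => f (σ h x) / X x) ∧
      (∫ x : ℝ, f (σ h x) / X x) = ∫ x : ℝ, f x / X x :=
  statement1_general X σ h f hX hXpos hσ0 hgrp hflow hint
end

section
/- Let X : ℝ → ℝ be continuously differentiable with X(x) > 0 for all x, let σ be a one-parameter group of diffeomorphisms generated by X, and let h ∈ ℝ, m ∈ ℤ. Let a, b : ℝ → ℝ be measurable functions such that x ↦ a(x)b(σ(mh,x))/X(x) and x ↦ b(x)a(σ(−mh,x))/X(x) are integrable on ℝ. Then ∫_ℝ a(x) b(σ(mh,x)) / X(x) dx = ∫_ℝ b(x) a(σ(−mh,x)) / X(x) dx. (Equivalently, the adjoint of the shift operator E^m with respect to the duality map ⟨η,K⟩ = ∫ ηK dx/X is E^{−m}, and the trace form Tr(A) = ∫ res(A𝓔^{−1}) dx/X is symmetric: Tr(AB) = Tr(BA) on monomial shift operators A = a𝓔^m, B = b𝓔^{−m}.) -/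
/-!
The measure `dx / X` is invariant under the flow. Indeed, a primitive `F` of `1 / X` straightens
the flow, `F (σ t x) = F x + t`, so `F` is a diffeomorphism of `ℝ` carrying `dx / X` to Lebesgue
measure and `σ t` to a translation. Substituting `y = σ (m h) x` and using
`σ (-(m h)) ∘ σ (m h) = id` then gives the identity.
-/

open MeasureTheory Function

theorem integral_deriv_smul_comp_of_surjective {E : Type*} [NormedAddCommGroup E]
    [NormedSpace ℝ E] {f f' : ℝ → ℝ} (hf : ∀ x, HasDerivAt f (f' x) x) (hf' : ∀ x, 0 < f' x)
    (hsurj : Surjective f) (g : ℝ → E) : ∫ x, f' x • g (f x) = ∫ u, g u := by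
  have hinj : Injective f := (strictMono_of_hasDerivAt_pos hf hf').injective
  have := integral_image_eq_integral_abs_deriv_smul MeasurableSet.univ
    (fun x _ => (hf x).hasDerivWithinAt) hinj.injOn g
  simpa [hsurj.range_eq, abs_of_pos (hf' _)] using this.symm

theorem comp_flow_eq_add {X F : ℝ → ℝ} {σ : ℝ → ℝ → ℝ} (hXne : ∀ x, X x ≠ 0)
    (hF : ∀ x, HasDerivAt F (X x)⁻¹ x) (hσ0 : ∀ x, σ 0 x = x)
    (hflow : ∀ t x, HasDerivAt (fun s => σ s x) (X (σ t x)) t) (t x : ℝ) :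
    F (σ t x) = F x + t := by
  have hderiv : ∀ u, HasDerivAt (fun u => F (σ u x) - u) 0 u := fun u =>
    (((hF (σ u x)).comp u (hflow u x)).sub (hasDerivAt_id u)).congr_deriv
      (by rw [inv_mul_cancel₀ (hXne (σ u x)), sub_self])
  have hconst := is_const_of_deriv_eq_zero (fun u => (hderiv u).differentiableAt)
    (fun u => (hderiv u).deriv) t 0
  simp only [hσ0, sub_zero] at hconst
  linarith

theorem integral_comp_flow_div {X : ℝ → ℝ} {σ : ℝ → ℝ → ℝ} (hX : Continuous X)
    (hXpos : ∀ x, 0 < X x) (hσ0 : ∀ x, σ 0 x = x)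
    (hflow : ∀ t x, HasDerivAt (fun s => σ s x) (X (σ t x)) t) (g : ℝ → ℝ) (t : ℝ) :
    ∫ x, g (σ t x) / X x = ∫ x, g x / X x := by
  have hXne : ∀ x, X x ≠ 0 := fun x => (hXpos x).ne'
  set F : ℝ → ℝ := fun y => ∫ s in (0 : ℝ)..y, (X s)⁻¹
  have hF : ∀ x, HasDerivAt F (X x)⁻¹ x := fun x =>
    ((hX.inv₀ hXne).integral_hasStrictDerivAt 0 x).hasDerivAt
  have hF' : ∀ x, 0 < (X x)⁻¹ := fun x => inv_pos.mpr (hXpos x)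
  have hrect := comp_flow_eq_add hXne hF hσ0 hflow
  have hsurj : Surjective F := fun u => ⟨σ (u - F 0) 0, by rw [hrect]; ring⟩
  obtain ⟨G, hG⟩ := (strictMono_of_hasDerivAt_pos hF hF').injective.hasLeftInverse
  have hGflow : ∀ x, G (F x + t) = σ t x := fun x => by rw [← hrect, hG]
  calc ∫ x, g (σ t x) / X x = ∫ x, (X x)⁻¹ • (g ∘ G) (F x + t) := by
        simp only [comp_apply, hGflow, smul_eq_mul, inv_mul_eq_div]
    _ = ∫ u, (g ∘ G) (u + t) :=
        integral_deriv_smul_comp_of_surjective hF hF' hsurj fun u => (g ∘ G) (u + t)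
    _ = ∫ u, (g ∘ G) u := integral_add_right_eq_self _ t
    _ = ∫ x, (X x)⁻¹ • (g ∘ G) (F x) :=
        (integral_deriv_smul_comp_of_surjective hF hF' hsurj _).symm
    _ = ∫ x, g x / X x := by simp only [comp_apply, hG _, smul_eq_mul, inv_mul_eq_div]

theorem statement2_general (X : ℝ → ℝ) (σ : ℝ → ℝ → ℝ) (h : ℝ) (m : ℤ) (a b : ℝ → ℝ)
    (hX : ContDiff ℝ 1 X) (hXpos : ∀ x : ℝ, 0 < X x)
    (hσ0 : ∀ x : ℝ, σ 0 x = x)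
    (hgrp : ∀ s t x : ℝ, σ s (σ t x) = σ (s + t) x)
    (hflow : ∀ t x : ℝ, HasDerivAt (fun s => σ s x) (X (σ t x)) t) :
    (∫ x : ℝ, a x * b (σ ((m : ℝ) * h) x) / X x)
      = ∫ x : ℝ, b x * a (σ (-(m : ℝ) * h) x) / X x := by
  have hback : ∀ x, σ (-(m : ℝ) * h) (σ ((m : ℝ) * h) x) = x := fun x => by
    rw [hgrp, neg_mul, neg_add_cancel, hσ0]
  calc ∫ x, a x * b (σ ((m : ℝ) * h) x) / X x
      = ∫ x, (fun y => a (σ (-(m : ℝ) * h) y) * b y) (σ ((m : ℝ) * h) x) / X x := by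
        simp only [hback]
    _ = ∫ y, a (σ (-(m : ℝ) * h) y) * b y / X y :=
        integral_comp_flow_div hX.continuous hXpos hσ0 hflow
          (fun y => a (σ (-(m : ℝ) * h) y) * b y) ((m : ℝ) * h)
    _ = ∫ x, b x * a (σ (-(m : ℝ) * h) x) / X x := by simp only [mul_comm]

/-- The adjoint of the shift operator `E^m` with respect to the duality
map `⟨η,K⟩ = ∫ ηK dx/X` is `E^{−m}`: the trace form is symmetric on monomial shift
operators. -/
theorem statement2 (X : ℝ → ℝ) (σ : ℝ → ℝ → ℝ) (h : ℝ) (m : ℤ) (a b : ℝ → ℝ)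
    (hX : ContDiff ℝ 1 X) (hXpos : ∀ x : ℝ, 0 < X x)
    (hσ0 : ∀ x : ℝ, σ 0 x = x)
    (hgrp : ∀ s t x : ℝ, σ s (σ t x) = σ (s + t) x)
    (hflow : ∀ t x : ℝ, HasDerivAt (fun s => σ s x) (X (σ t x)) t)
    (ha : Measurable a) (hb : Measurable b)
    (h1 : Integrable (fun x => a x * b (σ ((m : ℝ) * h) x) / X x))
    (h2 : Integrable (fun x => b x * a (σ (-(m : ℝ) * h) x) / X x)) :
    (∫ x : ℝ, a x * b (σ ((m : ℝ) * h) x) / X x)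
      = ∫ x : ℝ, b x * a (σ (-(m : ℝ) * h) x) / X x :=
  statement2_general X σ h m a b hX hXpos hσ0 hgrp hflow
end

section
/- Let X : ℝ → ℝ be continuous with X(x) > 0 for all x, let σ be a one-parameter group of diffeomorphisms generated by X (σ(0,x) = x, σ(s,σ(t,x)) = σ(s+t,x), ∂σ/∂t(t,x) = X(σ(t,x))), and fix x₀ ∈ ℝ. Assume the orbit map t ↦ σ(t, x₀) is a bijection from ℝ onto ℝ. Let g : ℝ → ℝ be continuous such that the map t ↦ g(σ(t, x₀)) has compact support. Then lim_{h→0⁺} h ∑_{n∈ℤ} g(σ(nh, x₀)) = ∫_ℝ g(x)/X(x) dx. -/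
/-!
The substitution `x = σ(t, x₀)` has `dx = X(σ(t, x₀)) dt`, so it turns `∫ g(x)/X(x) dx` into
`∫ g(σ(t, x₀)) dt`, and `h ∑ₙ g(σ(nh, x₀))` is a Riemann sum of the continuous, compactly supported
function `f t = g(σ(t, x₀))` on the grid `hℤ`. Such a Riemann sum is the integral of the step function
`t ↦ f(h⌊t/h⌋)`, which converges pointwise to `f` as `h → 0⁺` and is dominated uniformly for
`h ≤ 1`, so dominated convergence finishes the proof.
-/

open MeasureTheory Filter Topology Metric Set

section FloorGrid

variable {h : ℝ}

lemma floor_div_eq_iff_mem_Ico (hh : 0 < h) {t : ℝ} {n : ℤ} :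
    ⌊t / h⌋ = n ↔ t ∈ Ico (n * h) ((n + 1) * h) := by
  rw [Int.floor_eq_iff, le_div_iff₀ hh, div_lt_iff₀ hh, mem_Ico]

lemma floor_div_mul_le (hh : 0 < h) (t : ℝ) : (⌊t / h⌋ : ℝ) * h ≤ t :=
  ((floor_div_eq_iff_mem_Ico hh (t := t)).1 rfl).1

lemma sub_lt_floor_div_mul (hh : 0 < h) (t : ℝ) : t - h < (⌊t / h⌋ : ℝ) * h := by
  linarith [((floor_div_eq_iff_mem_Ico hh (t := t)).1 rfl).2]

lemma dist_floor_div_mul_lt (hh : 0 < h) (t : ℝ) : dist t (⌊t / h⌋ * h) < h := by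
  rw [Real.dist_eq, abs_of_nonneg (sub_nonneg.2 (floor_div_mul_le hh t))]
  linarith [sub_lt_floor_div_mul hh t]

lemma tendsto_floor_div_mul_nhdsGT (t : ℝ) :
    Tendsto (fun h : ℝ => (⌊t / h⌋ : ℝ) * h) (𝓝[>] 0) (𝓝 t) := by
  have hlow : Tendsto (fun h : ℝ => t - h) (𝓝[>] 0) (𝓝 t) := by
    simpa using ((tendsto_const_nhds (x := t)).sub tendsto_id).mono_left
      (nhdsWithin_le_nhds (a := (0 : ℝ)))
  refine tendsto_of_tendsto_of_tendsto_of_le_of_le' hlow tendsto_const_nhds ?_ ?_ <;>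
    filter_upwards [self_mem_nhdsWithin] with h (hh : 0 < h)
  · exact (sub_lt_floor_div_mul hh t).le
  · exact floor_div_mul_le hh t

end FloorGrid

section RiemannSum

variable {E : Type*} [NormedAddCommGroup E] {f : ℝ → E} {h : ℝ}

lemma norm_comp_floor_div_mul_le_indicator {C M : ℝ} (hC : ∀ x, ‖f x‖ ≤ C)
    (hM : Function.support f ⊆ closedBall 0 M) (hh : 0 < h) (hh1 : h ≤ 1) (t : ℝ) :
    ‖f (⌊t / h⌋ * h)‖ ≤ (closedBall 0 (M + 1)).indicator (fun _ => C) t := by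
  by_cases ht : t ∈ closedBall 0 (M + 1)
  · rw [indicator_of_mem ht]
    exact hC _
  · have hzero : f (⌊t / h⌋ * h) = 0 := Function.notMem_support.1 fun hs => ht ?_
    · rw [indicator_of_notMem ht, hzero, norm_zero]
    have hs' : dist (⌊t / h⌋ * h : ℝ) 0 ≤ M := hM hs
    rw [mem_closedBall]
    linarith [dist_triangle t (⌊t / h⌋ * h) 0, dist_floor_div_mul_lt hh t]

variable [NormedSpace ℝ E] [CompleteSpace E]

lemma integral_comp_floor_div_mul (hh : 0 < h)
    (hint : Integrable fun t : ℝ => f (⌊t / h⌋ * h)) :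
    ∫ t, f (⌊t / h⌋ * h) = h • ∑' n : ℤ, f (n * h) := by
  let cell : ℤ → Set ℝ := fun n => Ico (n * h) ((n + 1) * h)
  have hcover : (⋃ n, cell n) = univ :=
    eq_univ_of_forall fun t => mem_iUnion.2 ⟨⌊t / h⌋, (floor_div_eq_iff_mem_Ico hh).1 rfl⟩
  have hdisj : Pairwise (Function.onFun Disjoint cell) := fun m n hmn =>
    disjoint_left.2 fun t htm htn =>
      hmn (((floor_div_eq_iff_mem_Ico hh).2 htm).symm.trans ((floor_div_eq_iff_mem_Ico hh).2 htn))
  have hcell : ∀ n : ℤ, ∫ t in cell n, f (⌊t / h⌋ * h) = h • f (n * h) := fun n => by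
    rw [setIntegral_congr_fun measurableSet_Ico
      fun t ht => congrArg (fun m : ℤ => f (m * h)) ((floor_div_eq_iff_mem_Ico hh).2 ht),
      setIntegral_const, Real.volume_real_Ico_of_le (by nlinarith)]
    congr 1
    ring
  rw [← setIntegral_univ, ← hcover, integral_iUnion (fun _ => measurableSet_Ico) hdisj
    (hcover ▸ hint.integrableOn)]
  exact (tsum_congr hcell).trans (tsum_const_smul'' h)

theorem HasCompactSupport.tendsto_smul_tsum_int_mul_integral (hsupp : HasCompactSupport f)
    (hf : Continuous f) :
    Tendsto (fun h : ℝ => h • ∑' n : ℤ, f (n * h)) (𝓝[>] 0) (𝓝 (∫ t, f t)) := by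
  obtain ⟨C, hC⟩ := hsupp.exists_bound_of_continuous hf
  obtain ⟨M, hM⟩ := hsupp.isBounded.subset_closedBall 0
  set bound : ℝ → ℝ := (closedBall 0 (M + 1)).indicator fun _ => C
  have hbound : Integrable bound :=
    (integrable_indicator_iff measurableSet_closedBall).2
      (integrableOn_const measure_closedBall_lt_top.ne)
  have hmeas (h : ℝ) : AEStronglyMeasurable fun t : ℝ => f (⌊t / h⌋ * h) :=
    hf.comp_aestronglyMeasurable (by fun_prop : Measurable _).aestronglyMeasurable
  have hdom : ∀ᶠ h in 𝓝[>] (0 : ℝ), 0 < h ∧ ∀ t, ‖f (⌊t / h⌋ * h)‖ ≤ bound t := by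
    filter_upwards [Ioc_mem_nhdsGT zero_lt_one] with h hh
    exact ⟨hh.1, norm_comp_floor_div_mul_le_indicator hC ((subset_tsupport f).trans hM) hh.1 hh.2⟩
  refine (tendsto_integral_filter_of_dominated_convergence bound (.of_forall hmeas)
    (hdom.mono fun h hh => .of_forall hh.2) hbound
    (.of_forall fun t => (hf.tendsto t).comp (tendsto_floor_div_mul_nhdsGT t))).congr' ?_
  filter_upwards [hdom] with h ⟨hh, hle⟩
  exact integral_comp_floor_div_mul hh (hbound.mono' (hmeas h) (.of_forall hle))

end RiemannSum

lemma integral_eq_integral_abs_deriv_smul_comp {E : Type*} [NormedAddCommGroup E]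
    [NormedSpace ℝ E] {φ φ' : ℝ → ℝ} (hφ : ∀ t, HasDerivAt φ (φ' t) t)
    (hbij : Function.Bijective φ) (g : ℝ → E) :
    ∫ x, g x = ∫ t, |φ' t| • g (φ t) := by
  simpa only [image_univ, hbij.2.range_eq, setIntegral_univ] using
    integral_image_eq_integral_abs_deriv_smul MeasurableSet.univ
      (fun t _ => (hφ t).hasDerivWithinAt) hbij.1.injOn g

theorem statement7_general (X : ℝ → ℝ) (σ : ℝ → ℝ → ℝ) (x₀ : ℝ) (g : ℝ → ℝ)
    (hXpos : ∀ x : ℝ, 0 < X x)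
    (hflow : ∀ t x : ℝ, HasDerivAt (fun s => σ s x) (X (σ t x)) t)
    (horbit : Function.Bijective (fun t => σ t x₀))
    (hg : Continuous g)
    (hsupp : HasCompactSupport (fun t => g (σ t x₀))) :
    Tendsto (fun h : ℝ => h * ∑' n : ℤ, g (σ ((n : ℝ) * h) x₀))
      (nhdsWithin 0 (Set.Ioi 0)) (nhds (∫ x : ℝ, g x / X x)) := by
  have horbit_deriv (t : ℝ) : HasDerivAt (fun t => σ t x₀) (X (σ t x₀)) t := hflow t x₀
  have horbit_cont : Continuous fun t => σ t x₀ :=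
    continuous_iff_continuousAt.2 fun t => (horbit_deriv t).continuousAt
  have hsubst : ∫ x, g x / X x = ∫ t, g (σ t x₀) := by
    rw [integral_eq_integral_abs_deriv_smul_comp horbit_deriv horbit]
    congr 1 with t
    rw [abs_of_pos (hXpos _), smul_eq_mul, mul_div_cancel₀ _ (hXpos _).ne']
  rw [hsubst]
  simpa only [smul_eq_mul] using hsupp.tendsto_smul_tsum_int_mul_integral (hg.comp horbit_cont)

/-- The discrete functional `ℏ ∑_{n∈ℤ} g(σ(nℏ,x₀))` converges, as
`ℏ → 0⁺`, to the continuous functional `∫ g(x)/X(x) dx`. -/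
theorem statement7 (X : ℝ → ℝ) (σ : ℝ → ℝ → ℝ) (x₀ : ℝ) (g : ℝ → ℝ)
    (hX : Continuous X) (hXpos : ∀ x : ℝ, 0 < X x)
    (hσ0 : ∀ x : ℝ, σ 0 x = x)
    (hgrp : ∀ s t x : ℝ, σ s (σ t x) = σ (s + t) x)
    (hflow : ∀ t x : ℝ, HasDerivAt (fun s => σ s x) (X (σ t x)) t)
    (horbit : Function.Bijective (fun t => σ t x₀))
    (hg : Continuous g)
    (hsupp : HasCompactSupport (fun t => g (σ t x₀))) :
    Tendsto (fun h : ℝ => h * ∑' n : ℤ, g (σ ((n : ℝ) * h) x₀))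
      (nhdsWithin 0 (Set.Ioi 0)) (nhds (∫ x : ℝ, g x / X x)) :=
  statement7_general X σ x₀ g hXpos hflow horbit hg hsupp
end

section
/- Let X : ℝ → ℝ be smooth with X(x) > 0 for all x, let σ be a one-parameter group of diffeomorphisms generated by X, let h > 0 and N ∈ ℕ. Let u : ℝ × ℝ → ℝ be smooth, with u(·, t) compactly supported uniformly for t in compact sets, and let f : ℝ^{2N+1} → ℝ be smooth with f(0,…,0) = 0. Define F(t) = ∫_ℝ f( u(σ(−Nh, x), t), …, u(σ(Nh, x), t) ) / X(x) dx. Then F is differentiable and F'(t) = ∫_ℝ [ ∑_{m=−N}^{N} g_m(σ(−mh, x), t) ] · ∂u/∂t (x, t) / X(x) dx, where g_m(x,t) := (∂f/∂v_m)( u(σ(−Nh,x),t), …, u(σ(Nh,x),t) ) denotes the partial derivative of f with respect to its m-th argument evaluated along the shifted fields. (That is, the differential of the functional F(u) = ∫ f[u] d_ℏx is given by the variational derivative δF/δu = ∑_m E^{−m} ∂f/∂(E^m u), so that dF/dt = ∫ (δF/δu) u_t d_ℏx.) -/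
open MeasureTheory intervalIntegral

noncomputable def Phi (X : ℝ → ℝ) (x : ℝ) : ℝ := ∫ y in (0:ℝ)..x, (X y)⁻¹

theorem phi_hasDerivAt {X : ℝ → ℝ} (hX : Continuous X) (hXpos : ∀ x, 0 < X x) (x : ℝ) :
    HasDerivAt (Phi X) (X x)⁻¹ x := by
  have hc : Continuous fun y => (X y)⁻¹ := hX.inv₀ (fun y => (hXpos y).ne')
  exact integral_hasDerivAt_right (hc.intervalIntegrable _ _)
    (hc.stronglyMeasurable.stronglyMeasurableAtFilter) hc.continuousAt

theorem phi_strictMono {X : ℝ → ℝ} (hX : Continuous X) (hXpos : ∀ x, 0 < X x) :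
    StrictMono (Phi X) := by
  apply strictMono_of_deriv_pos
  intro x
  rw [(phi_hasDerivAt hX hXpos x).deriv]
  exact inv_pos.2 (hXpos x)

theorem phi_shift {X : ℝ → ℝ} {σ : ℝ → ℝ → ℝ} (hX : Continuous X) (hXpos : ∀ x, 0 < X x)
    (hσ0 : ∀ x : ℝ, σ 0 x = x)
    (hflow : ∀ t x : ℝ, HasDerivAt (fun s => σ s x) (X (σ t x)) t)
    (s x : ℝ) : Phi X (σ s x) = Phi X x + s := by
  have key : ∀ r : ℝ, HasDerivAt (fun r => Phi X (σ r x) - r) 0 r := by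
    intro r
    have h1 : HasDerivAt (fun r => Phi X (σ r x)) ((X (σ r x))⁻¹ * X (σ r x)) r :=
      by have := (phi_hasDerivAt hX hXpos (σ r x)).comp r (hflow r x); exact this
    have h2 := h1.sub (hasDerivAt_id r)
    have : (X (σ r x))⁻¹ * X (σ r x) - 1 = 0 := by
      rw [inv_mul_cancel₀ (hXpos (σ r x)).ne', sub_self]
    rwa [this] at h2
  have hconst := is_const_of_deriv_eq_zero (f := fun r => Phi X (σ r x) - r)
    (fun r => (key r).differentiableAt) (fun r => (key r).deriv) s 0
  simp only [hσ0, sub_zero] at hconst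
  linarith

section Sigma
variable {X : ℝ → ℝ} {σ : ℝ → ℝ → ℝ}
  (hX : Continuous X) (hXpos : ∀ x, 0 < X x)
  (hσ0 : ∀ x : ℝ, σ 0 x = x)
  (hgrp : ∀ s t x : ℝ, σ s (σ t x) = σ (s + t) x)
  (hflow : ∀ t x : ℝ, HasDerivAt (fun s => σ s x) (X (σ t x)) t)

include hσ0 hgrp in
theorem sigma_inv (c x : ℝ) : σ (-c) (σ c x) = x := by
  rw [hgrp, neg_add_cancel, hσ0]

include hX hXpos hσ0 hflow in
theorem sigma_strictMono (c : ℝ) : StrictMono (fun x => σ c x) := by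
  intro a b hab
  have := (phi_strictMono hX hXpos).lt_iff_lt (a := σ c a) (b := σ c b)
  rw [phi_shift hX hXpos hσ0 hflow, phi_shift hX hXpos hσ0 hflow] at this
  exact this.1 (by linarith [(phi_strictMono hX hXpos) hab])

include hσ0 hgrp in
theorem sigma_surjective (c : ℝ) : Function.Surjective (fun x => σ c x) := by
  intro y
  exact ⟨σ (-c) y, by simp only; rw [hgrp]; simp [hσ0]⟩

include hX hXpos hσ0 hgrp hflow in
theorem sigma_continuous (c : ℝ) : Continuous (fun x => σ c x) := by
  have := (StrictMono.orderIsoOfSurjective _ (sigma_strictMono hX hXpos hσ0 hflow c)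
    (sigma_surjective hσ0 hgrp c)).continuous
  simpa using this

include hX hXpos hσ0 hgrp hflow in
theorem shift_invariance (c : ℝ) (φ : ℝ → ℝ) :
    ∫ x : ℝ, φ (σ c x) / X x = ∫ x : ℝ, φ x / X x := by
  classical
  set Φ := Phi X with hΦ
  have hinj : Function.Injective Φ := (phi_strictMono hX hXpos).injective
  set Ψ := Function.invFun Φ with hΨ
  have hΨΦ : ∀ x, Ψ (Φ x) = x := fun x => Function.leftInverse_invFun hinj x
  set S := Set.range Φ with hS
  have hΦcont : Continuous Φ := continuous_iff_continuousAt.2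
    (fun x => (phi_hasDerivAt hX hXpos x).differentiableAt.continuousAt)
  have hSmeas : MeasurableSet S := (isPreconnected_range hΦcont).ordConnected.measurableSet
  -- image formula
  have himg : ∀ g : ℝ → ℝ, ∫ z in S, g z = ∫ x : ℝ, g (Φ x) / X x := by
    intro g
    have := integral_image_eq_integral_abs_deriv_smul (s := Set.univ) (f := Φ)
      (f' := fun x => (X x)⁻¹) MeasurableSet.univ
      (fun x _ => (phi_hasDerivAt hX hXpos x).hasDerivWithinAt) (hinj.injOn) g
    rw [Set.image_univ] at this
    rw [← hS] at this
    rw [this, MeasureTheory.setIntegral_univ]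
    congr 1; funext x
    rw [abs_of_pos (inv_pos.2 (hXpos x)), smul_eq_mul, div_eq_inv_mul]
  have hshiftS : ∀ z : ℝ, z ∈ S ↔ z + c ∈ S := by
    intro z
    constructor
    · rintro ⟨x, rfl⟩
      exact ⟨σ c x, by show Phi X _ = Phi X _ + c; rw [phi_shift hX hXpos hσ0 hflow]⟩
    · rintro ⟨y, hy⟩
      refine ⟨σ (-c) y, ?_⟩
      show Phi X (σ (-c) y) = z
      have h2 : Phi X y = z + c := hy
      rw [phi_shift hX hXpos hσ0 hflow, h2]; ring
  have key : Set.indicator S (fun z => φ (σ c (Ψ z))) =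
      fun z => Set.indicator S (fun z => φ (Ψ z)) (z + c) := by
    funext z
    by_cases hz : z ∈ S
    · rw [Set.indicator_of_mem hz, Set.indicator_of_mem ((hshiftS z).1 hz)]
      obtain ⟨x, rfl⟩ := hz
      have : Φ x + c = Φ (σ c x) := (phi_shift hX hXpos hσ0 hflow c x).symm
      rw [hΨΦ, this, hΨΦ]
    · rw [Set.indicator_of_notMem hz,
        Set.indicator_of_notMem (fun hc' => hz ((hshiftS z).2 hc'))]
  have e1 : ∫ x : ℝ, φ (σ c x) / X x = ∫ z in S, φ (σ c (Ψ z)) := by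
    rw [himg]
    congr 1; funext x; rw [hΨΦ]
  have e2 : ∫ x : ℝ, φ x / X x = ∫ z in S, φ (Ψ z) := by
    rw [himg]
    congr 1; funext x; rw [hΨΦ]
  rw [e1, e2, ← MeasureTheory.integral_indicator hSmeas, ← MeasureTheory.integral_indicator hSmeas, key]
  exact integral_add_right_eq_self (fun z => Set.indicator S (fun z => φ (Ψ z)) z) c

end Sigma


theorem update_hasDerivAt {n : ℕ} (w : Fin n → ℝ) (j : Fin n) (s : ℝ) :
    HasDerivAt (fun s => Function.update w j s) (Pi.single j 1) s := by
  rw [hasDerivAt_pi]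
  intro i
  rcases eq_or_ne i j with rfl | hij
  · simp only [Function.update_self, Pi.single_eq_same]
    simpa using (hasDerivAt_id' s)
  · simp only [Function.update_of_ne hij, Pi.single_eq_of_ne hij]
    exact hasDerivAt_const s (w i)

theorem partial_eq_fderiv {n : ℕ} {f : (Fin n → ℝ) → ℝ} (w : Fin n → ℝ)
    (hf : DifferentiableAt ℝ f w) (j : Fin n) :
    deriv (fun s => f (Function.update w j s)) (w j) = fderiv ℝ f w (Pi.single j 1) := by
  have h1 : HasDerivAt (fun s => f (Function.update w j s))
      (fderiv ℝ f w (Pi.single j 1)) (w j) := by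
    have h0 : HasDerivAt (fun s => Function.update w j s) (Pi.single j 1) (w j) :=
      update_hasDerivAt w j (w j)
    have h2 : HasFDerivAt f (fderiv ℝ f w) (Function.update w j (w j)) := by
      rw [Function.update_eq_self]; exact hf.hasFDerivAt
    exact h2.comp_hasDerivAt (w j) h0
  exact h1.deriv

theorem fderiv_apply_eq_sum {n : ℕ} {f : (Fin n → ℝ) → ℝ} (w z : Fin n → ℝ) :
    fderiv ℝ f w z = ∑ j, fderiv ℝ f w (Pi.single j 1) * z j := by
  have hz : z = ∑ j, z j • (Pi.single j 1 : Fin n → ℝ) := by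
    funext i
    rw [Finset.sum_apply]
    rw [Finset.sum_eq_single i]
    · simp
    · intro b _ hb; simp [Pi.single_eq_of_ne (Ne.symm hb)]
    · simp
  conv_lhs => rw [hz]
  rw [map_sum]
  congr 1; funext j
  rw [(fderiv ℝ f w).map_smul]
  simp [mul_comm]

/-- The `2N+1` shifted fields `(E^{−N}u, …, E^{N}u)` evaluated at `(x,t)`:
the `j`-th component is `u(σ((j−N)h, x), t)`. -/
noncomputable def shiftedArgs (σ : ℝ → ℝ → ℝ) (h : ℝ) (N : ℕ) (u : ℝ → ℝ → ℝ)
    (x t : ℝ) : Fin (2 * N + 1) → ℝ :=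
  fun j => u (σ ((((j : ℤ) - (N : ℤ) : ℤ) : ℝ) * h) x) t

/-- `g_m(x,t)`: the partial derivative of `f` with respect to its `m`-th argument,
evaluated along the shifted fields at `(x,t)`. -/
noncomputable def varDensity (σ : ℝ → ℝ → ℝ) (h : ℝ) (N : ℕ) (u : ℝ → ℝ → ℝ)
    (f : (Fin (2 * N + 1) → ℝ) → ℝ) (j : Fin (2 * N + 1)) (x t : ℝ) : ℝ :=
  deriv (fun s => f (Function.update (shiftedArgs σ h N u x t) j s))
    (shiftedArgs σ h N u x t j)


set_option maxHeartbeats 1000000 in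
/-- the time derivative of the functional
`F(t) = ∫ f(E^{−N}u, …, E^{N}u)/X dx` is given by the variational derivative
`δF/δu = ∑_m E^{−m} ∂f/∂(E^m u)`, i.e.
`F'(t) = ∫ (∑_m g_m(σ(−mh,x),t)) u_t(x,t)/X(x) dx`. -/
theorem statement17 (X : ℝ → ℝ) (σ : ℝ → ℝ → ℝ) (h : ℝ) (N : ℕ)
    (u : ℝ → ℝ → ℝ) (f : (Fin (2 * N + 1) → ℝ) → ℝ)
    (hX : ContDiff ℝ (⊤ : ℕ∞) X) (hXpos : ∀ x : ℝ, 0 < X x)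
    (hσ0 : ∀ x : ℝ, σ 0 x = x)
    (hgrp : ∀ s t x : ℝ, σ s (σ t x) = σ (s + t) x)
    (hflow : ∀ t x : ℝ, HasDerivAt (fun s => σ s x) (X (σ t x)) t)
    (hh : 0 < h)
    (hu : ContDiff ℝ (⊤ : ℕ∞) (fun p : ℝ × ℝ => u p.1 p.2))
    (hsupp : ∀ K : Set ℝ, IsCompact K →
      ∃ R : ℝ, ∀ t ∈ K, ∀ x : ℝ, R < |x| → u x t = 0)
    (hf : ContDiff ℝ (⊤ : ℕ∞) f) (hf0 : f 0 = 0) :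
    ∀ t : ℝ,
      HasDerivAt (fun t' => ∫ x : ℝ, f (shiftedArgs σ h N u x t') / X x)
        (∫ x : ℝ,
          (∑ j : Fin (2 * N + 1),
            varDensity σ h N u f j (σ (-((((j : ℤ) - (N : ℤ) : ℤ) : ℝ) * h)) x) t)
            * deriv (fun s => u x s) t / X x) t := by
  intro t
  classical
  have hXc : Continuous X := hX.continuous
  -- abbreviations
  set c : Fin (2 * N + 1) → ℝ := fun j => (((j : ℤ) - (N : ℤ) : ℤ) : ℝ) * h with hc
  set U : ℝ × ℝ → ℝ := fun p => u p.1 p.2 with hU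
  have hUdiff : Differentiable ℝ U := hu.differentiable (by simp)
  have hUc : Continuous U := hu.continuous
  set V : ℝ → ℝ → Fin (2 * N + 1) → ℝ := shiftedArgs σ h N u with hV
  have hVeq : ∀ x t' j, V x t' j = u (σ (c j) x) t' := fun x t' j => rfl
  set ut : ℝ → ℝ → ℝ := fun y s => deriv (fun s => u y s) s with hutdef
  -- basic sigma facts
  have hσc : ∀ a, Continuous (fun x => σ a x) :=
    fun a => sigma_continuous hXc hXpos hσ0 hgrp hflow a
  have hσmono : ∀ a, StrictMono (fun x => σ a x) :=
    fun a => sigma_strictMono hXc hXpos hσ0 hflow a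
  have hσinv2 : ∀ a y, σ a (σ (-a) y) = y := by
    intro a y; rw [hgrp]; simp [hσ0]
  have hσinv : ∀ a y, σ (-a) (σ a y) = y := fun a y => sigma_inv hσ0 hgrp a y
  -- time derivative of u
  have hut : ∀ y s, HasDerivAt (fun s => u y s) (ut y s) s := by
    intro y s
    have hdiff : DifferentiableAt ℝ (fun s => u y s) s := by
      have : DifferentiableAt ℝ (fun s : ℝ => U (y, s)) s :=
        (hUdiff (y, s)).comp s ((differentiableAt_const y).prodMk differentiableAt_id)
      exact this
    exact hdiff.hasDerivAt
  have hut_eq : ∀ y s, ut y s = fderiv ℝ U (y, s) (0, 1) := by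
    intro y s
    have h1 : HasDerivAt (fun s : ℝ => U (y, s)) (fderiv ℝ U (y, s) (0, 1)) s :=
      (hUdiff (y, s)).hasFDerivAt.comp_hasDerivAt s
        ((hasDerivAt_const s y).prodMk (hasDerivAt_id s))
    exact (hut y s).unique h1
  have hut_cont : Continuous (fun p : ℝ × ℝ => ut p.1 p.2) := by
    have h1 : Continuous (fun p : ℝ × ℝ => fderiv ℝ U p ((0 : ℝ), (1 : ℝ))) :=
      (ContinuousLinearMap.apply ℝ ℝ ((0 : ℝ), (1 : ℝ))).continuous.comp
        (hu.continuous_fderiv (by simp))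
    have : (fun p : ℝ × ℝ => ut p.1 p.2) = fun p : ℝ × ℝ => fderiv ℝ U p ((0:ℝ), (1:ℝ)) := by
      funext p; rw [hut_eq p.1 p.2]
    rw [this]; exact h1
  -- joint continuity of V
  have hVcont : Continuous (fun p : ℝ × ℝ => V p.1 p.2) := by
    apply continuous_pi
    intro j
    exact hUc.comp (((hσc (c j)).comp continuous_fst).prodMk continuous_snd)
  have hVderiv : ∀ x t', HasDerivAt (fun t' => V x t') (fun j => ut (σ (c j) x) t') t' :=
    fun x t' => hasDerivAt_pi.2 fun j => hut (σ (c j) x) t'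
  have hfd : Differentiable ℝ f := hf.differentiable (by simp)
  have hfc : Continuous f := hf.continuous
  -- varDensity in terms of fderiv
  have hvd : ∀ j x t', varDensity σ h N u f j x t' = fderiv ℝ f (V x t') (Pi.single j 1) :=
    fun j x t' => partial_eq_fderiv (V x t') (hfd (V x t')) j
  -- the pointwise derivative
  set G : ℝ → ℝ → ℝ := fun x t' =>
    (∑ j, fderiv ℝ f (V x t') (Pi.single j 1) * ut (σ (c j) x) t') / X x with hG
  have hGderiv : ∀ x t', HasDerivAt (fun t' => f (V x t') / X x) (G x t') t' := by
    intro x t'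
    have h1 : HasDerivAt (fun t' => f (V x t'))
        (fderiv ℝ f (V x t') (fun j => ut (σ (c j) x) t')) t' :=
      (hfd (V x t')).hasFDerivAt.comp_hasDerivAt t' (hVderiv x t')
    have h2 := h1.div_const (X x)
    have h3 : fderiv ℝ f (V x t') (fun j => ut (σ (c j) x) t') =
        ∑ j, fderiv ℝ f (V x t') (Pi.single j 1) * ut (σ (c j) x) t' :=
      fderiv_apply_eq_sum (V x t') (fun j => ut (σ (c j) x) t')
    rw [h3] at h2
    exact h2
  -- joint continuity of G
  have hDcont : ∀ j : Fin (2 * N + 1),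
      Continuous (fun p : ℝ × ℝ => fderiv ℝ f (V p.1 p.2) (Pi.single j 1)) := by
    intro j
    exact (ContinuousLinearMap.apply ℝ ℝ (Pi.single j 1)).continuous.comp
      ((hf.continuous_fderiv (by simp)).comp hVcont)
  have hGcont : Continuous (fun p : ℝ × ℝ => G p.1 p.2) := by
    apply Continuous.div
    · apply continuous_finset_sum
      intro j _
      exact (hDcont j).mul
        (hut_cont.comp (((hσc (c j)).comp continuous_fst).prodMk continuous_snd))
    · exact hXc.comp continuous_fst
    · exact fun p => (hXpos p.1).ne'
  -- compact support setup
  obtain ⟨R, hR⟩ := hsupp (Set.Icc (t - 1) (t + 1)) isCompact_Icc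
  set R' : ℝ := Finset.univ.sup' Finset.univ_nonempty
    (fun j : Fin (2 * N + 1) => max |σ (-(c j)) (R + 1)| |σ (-(c j)) (-(R + 1))|) with hR'
  have hR'0 : 0 ≤ R' := by
    refine le_trans (le_max_of_le_left (abs_nonneg _))
      (Finset.le_sup' (fun j : Fin (2 * N + 1) =>
        max |σ (-(c j)) (R + 1)| |σ (-(c j)) (-(R + 1))|) (Finset.mem_univ 0))
  have hbig : ∀ (j : Fin (2 * N + 1)) (x : ℝ), R' < |x| → R < |σ (c j) x| := by
    intro j x hx
    have hsup : max |σ (-(c j)) (R + 1)| |σ (-(c j)) (-(R + 1))| ≤ R' :=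
      Finset.le_sup' (fun j : Fin (2 * N + 1) =>
        max |σ (-(c j)) (R + 1)| |σ (-(c j)) (-(R + 1))|) (Finset.mem_univ j)
    have hs1 : |σ (-(c j)) (R + 1)| ≤ R' := le_trans (le_max_left _ _) hsup
    have hs2 : |σ (-(c j)) (-(R + 1))| ≤ R' := le_trans (le_max_right _ _) hsup
    rcases lt_abs.1 hx with hx1 | hx1
    · have h1 : σ (-(c j)) (R + 1) < x := lt_of_le_of_lt (le_trans (le_abs_self _) hs1) hx1
      have h2 : σ (c j) (σ (-(c j)) (R + 1)) < σ (c j) x := hσmono (c j) h1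
      rw [hσinv2] at h2
      calc R < R + 1 := by linarith
        _ ≤ |σ (c j) x| := le_trans (le_of_lt h2) (le_abs_self _)
    · have h1 : x < σ (-(c j)) (-(R + 1)) := by
        linarith [neg_abs_le (σ (-(c j)) (-(R + 1))), hs2, hx1]
      have h2 : σ (c j) x < σ (c j) (σ (-(c j)) (-(R + 1))) := hσmono (c j) h1
      rw [hσinv2] at h2
      have : R + 1 < -(σ (c j) x) := by linarith
      calc R < R + 1 := by linarith
        _ ≤ |σ (c j) x| := le_trans (le_of_lt this) (neg_le_abs _)
  have hu0 : ∀ (j : Fin (2 * N + 1)) (x : ℝ), R' < |x| →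
      ∀ t' ∈ Set.Icc (t - 1) (t + 1), u (σ (c j) x) t' = 0 :=
    fun j x hx t' ht' => hR t' ht' _ (hbig j x hx)
  have hV0 : ∀ x : ℝ, R' < |x| → ∀ t' ∈ Set.Icc (t - 1) (t + 1), V x t' = 0 := by
    intro x hx t' ht'
    funext j
    exact hu0 j x hx t' ht'
  have hderiv_zero : ∀ y : ℝ, (∀ s ∈ Set.Icc (t - 1) (t + 1), u y s = 0) →
      ∀ t' ∈ Metric.ball t 1, ut y t' = 0 := by
    intro y hy t' ht'
    rw [Real.ball_eq_Ioo] at ht'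
    have hev : (fun s => u y s) =ᶠ[nhds t'] (fun _ => (0 : ℝ)) := by
      refine Filter.eventuallyEq_of_mem (IsOpen.mem_nhds isOpen_Ioo ht') ?_
      intro s hs
      exact hy s (Set.Ioo_subset_Icc_self hs)
    have := hev.deriv_eq
    rw [deriv_const] at this
    exact this
  have hut0 : ∀ (j : Fin (2 * N + 1)) (x : ℝ), R' < |x| →
      ∀ t' ∈ Metric.ball t 1, ut (σ (c j) x) t' = 0 := by
    intro j x hx t' ht'
    exact hderiv_zero (σ (c j) x) (fun s hs => hu0 j x hx s hs) t' ht'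
  have hball_sub : Metric.ball t 1 ⊆ Set.Icc (t - 1) (t + 1) := by
    rw [Real.ball_eq_Ioo]; exact Set.Ioo_subset_Icc_self
  have htmem : t ∈ Metric.ball t 1 := Metric.mem_ball_self one_pos
  -- bound
  obtain ⟨p₀, hp₀, hCmax⟩ := (IsCompact.prod (isCompact_Icc :
      IsCompact (Set.Icc (-(R' + 1)) (R' + 1))) (isCompact_Icc :
      IsCompact (Set.Icc (t - 1) (t + 1)))).exists_isMaxOn
    (Set.Nonempty.prod ⟨0, Set.mem_Icc.2 ⟨by linarith, by linarith⟩⟩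
      ⟨t, Set.mem_Icc.2 ⟨by linarith, by linarith⟩⟩)
    ((hGcont.abs).continuousOn)
  set C : ℝ := |G p₀.1 p₀.2| with hC
  set bound : ℝ → ℝ := Set.indicator (Set.Icc (-(R' + 1)) (R' + 1)) (fun _ => C) with hbound
  have hnotin : ∀ x : ℝ, x ∉ Set.Icc (-(R' + 1)) (R' + 1) → R' < |x| := by
    intro x hx
    simp only [Set.mem_Icc, not_and_or, not_le] at hx
    rcases hx with h1 | h1
    · rw [abs_of_neg (by linarith)]; linarith
    · rw [abs_of_pos (by linarith)]; linarith
  have hGzero : ∀ x : ℝ, R' < |x| → ∀ t' ∈ Metric.ball t 1, G x t' = 0 := by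
    intro x hx t' ht'
    have : (∑ j, fderiv ℝ f (V x t') (Pi.single j 1) * ut (σ (c j) x) t') = 0 := by
      apply Finset.sum_eq_zero
      intro j _
      rw [hut0 j x hx t' ht', mul_zero]
    show (∑ j, fderiv ℝ f (V x t') (Pi.single j 1) * ut (σ (c j) x) t') / X x = 0
    rw [this, zero_div]
  have h_bound : ∀ x : ℝ, ∀ t' ∈ Metric.ball t 1, ‖G x t'‖ ≤ bound x := by
    intro x t' ht'
    by_cases hx : x ∈ Set.Icc (-(R' + 1)) (R' + 1)
    · rw [hbound, Set.indicator_of_mem hx, Real.norm_eq_abs]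
      have h5 : ((x, t') : ℝ × ℝ) ∈
          Set.Icc (-(R' + 1)) (R' + 1) ×ˢ Set.Icc (t - 1) (t + 1) :=
        Set.mem_prod.2 ⟨hx, hball_sub ht'⟩
      exact hCmax h5
    · rw [hbound, Set.indicator_of_notMem hx, Real.norm_eq_abs,
        hGzero x (hnotin x hx) t' ht', abs_zero]
  have hbound_int : MeasureTheory.Integrable bound := by
    rw [hbound, MeasureTheory.integrable_indicator_iff measurableSet_Icc]
    exact MeasureTheory.integrableOn_const measure_Icc_lt_top.ne
  -- continuity in x of integrands
  have hFxcont : ∀ t' : ℝ, Continuous (fun x => f (V x t') / X x) := by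
    intro t'
    exact ((hfc.comp (hVcont.comp (continuous_id.prodMk continuous_const)))).div hXc
      (fun x => (hXpos x).ne')
  have hGxcont : ∀ t' : ℝ, Continuous (fun x => G x t') :=
    fun t' => hGcont.comp (continuous_id.prodMk continuous_const)
  -- integrability of F t
  have hFint : MeasureTheory.Integrable (fun x => f (V x t) / X x) := by
    apply (hFxcont t).integrable_of_hasCompactSupport
    apply HasCompactSupport.intro (isCompact_Icc :
      IsCompact (Set.Icc (-(R' + 1)) (R' + 1)))
    intro x hx
    rw [hV0 x (hnotin x hx) t (hball_sub htmem), hf0, zero_div]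
  -- differentiate under the integral
  have main := hasDerivAt_integral_of_dominated_loc_of_deriv_le
    (F := fun t' x => f (V x t') / X x) (F' := fun t' x => G x t')
    (bound := bound) (Metric.ball_mem_nhds t one_pos)
    (Filter.Eventually.of_forall fun t' => ((hFxcont t').aestronglyMeasurable))
    hFint
    ((hGxcont t).aestronglyMeasurable)
    (Filter.Eventually.of_forall fun x => fun t' ht' => h_bound x t' ht')
    hbound_int
    (Filter.Eventually.of_forall fun x => fun t' _ => hGderiv x t')
  obtain ⟨-, hmain⟩ := main
  -- now rewrite the derivative value
  have hint1 : ∀ j : Fin (2 * N + 1), MeasureTheory.Integrable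
      (fun x => fderiv ℝ f (V x t) (Pi.single j 1) * ut (σ (c j) x) t / X x) := by
    intro j
    apply Continuous.integrable_of_hasCompactSupport
    · exact (((hDcont j).comp (continuous_id.prodMk continuous_const)).mul
        ((hut_cont.comp (((hσc (c j)).prodMk continuous_const))))).div hXc
        (fun x => (hXpos x).ne')
    · apply HasCompactSupport.intro (isCompact_Icc :
        IsCompact (Set.Icc (-(R' + 1)) (R' + 1)))
      intro x hx
      rw [hut0 j x (hnotin x hx) t htmem, mul_zero, zero_div]
  have hut00 : ∀ x : ℝ, R < |x| → ut x t = 0 := by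
    intro x hx
    exact hderiv_zero x (fun s hs => hR s hs x hx) t htmem
  have hint2 : ∀ j : Fin (2 * N + 1), MeasureTheory.Integrable
      (fun x => fderiv ℝ f (V (σ (-(c j)) x) t) (Pi.single j 1) * ut x t / X x) := by
    intro j
    apply Continuous.integrable_of_hasCompactSupport
    · exact ((((hDcont j).comp (continuous_id.prodMk continuous_const)).comp
        (hσc (-(c j)))).mul (hut_cont.comp (continuous_id.prodMk continuous_const))).div
        hXc (fun x => (hXpos x).ne')
    · apply HasCompactSupport.intro (isCompact_Icc :
        IsCompact (Set.Icc (-(|R| + 1)) (|R| + 1)))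
      intro x hx
      have : R < |x| := by
        simp only [Set.mem_Icc, not_and_or, not_le] at hx
        have hR1 : R ≤ |R| := le_abs_self R
        rcases hx with h1 | h1
        · rw [abs_of_neg (by nlinarith [abs_nonneg R])]; nlinarith [abs_nonneg R]
        · rw [abs_of_pos (by nlinarith [abs_nonneg R])]; nlinarith
      rw [hut00 x this, mul_zero, zero_div]
  have hval : (∫ x : ℝ, G x t) =
      ∫ x : ℝ,
        (∑ j : Fin (2 * N + 1),
          varDensity σ h N u f j (σ (-((((j : ℤ) - (N : ℤ) : ℤ) : ℝ) * h)) x) t)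
          * deriv (fun s => u x s) t / X x := by
    have e0 : (fun x => G x t) = fun x =>
        ∑ j, fderiv ℝ f (V x t) (Pi.single j 1) * ut (σ (c j) x) t / X x := by
      funext x
      show (∑ j, fderiv ℝ f (V x t) (Pi.single j 1) * ut (σ (c j) x) t) / X x = _
      rw [Finset.sum_div]
    rw [e0, MeasureTheory.integral_finset_sum _ (fun j _ => hint1 j)]
    have e1 : ∀ j : Fin (2 * N + 1),
        (∫ x : ℝ, fderiv ℝ f (V x t) (Pi.single j 1) * ut (σ (c j) x) t / X x) =
        ∫ x : ℝ, fderiv ℝ f (V (σ (-(c j)) x) t) (Pi.single j 1) * ut x t / X x := by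
      intro j
      have := shift_invariance hXc hXpos hσ0 hgrp hflow (c j)
        (fun y => fderiv ℝ f (V (σ (-(c j)) y) t) (Pi.single j 1) * ut y t)
      rw [← this]
      congr 1
      funext x
      rw [hσinv]
    simp_rw [e1]
    rw [← MeasureTheory.integral_finset_sum _ (fun j _ => hint2 j)]
    congr 1
    funext x
    rw [Finset.sum_mul, Finset.sum_div]
    congr 1
    funext j
    rw [hvd]
  rw [← hval]
  exact hmain
end
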